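/- Let (i,j) be a pair of distinct vertices with w_ij < w̄ and δ ∈ (0, w̄ − w_ij]. Then adding weight δ to edge (i,j) strictly reduces polarization, i.e., P(z⁺) < P(z), if and only if −∂_{w_ij}P(L) > (z_i − z_j)²·(v_ijᵀ(I+L)^{-2}v_ij)/(δ^{-1} + v_ijᵀ(I+L)^{-1}v_ij), where ∂_{w_ij}P(L) = −2·z̃ᵀ(I+L)^{-1}·L_ij·z̃. -/

import Mathlib

open Matrix Finset

noncomputable def deg {n : ℕ} (W : Matrix (Fin n) (Fin n) ℝ) (i : Fin n) : ℝ := ∑ j, W i j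

noncomputable def lap {n : ℕ} (W : Matrix (Fin n) (Fin n) ℝ) : Matrix (Fin n) (Fin n) ℝ :=
  Matrix.diagonal (deg W) - W

noncomputable def mean {n : ℕ} (x : Fin n → ℝ) : ℝ := (∑ i, x i) / n

noncomputable def ctr {n : ℕ} (x : Fin n → ℝ) : Fin n → ℝ := fun i => x i - mean x

noncomputable def pol {n : ℕ} (x : Fin n → ℝ) : ℝ := ∑ i, (x i - mean x) ^ 2

def vij {n : ℕ} (i j : Fin n) : Fin n → ℝ :=
  fun k => (if k = i then (1 : ℝ) else 0) - (if k = j then (1 : ℝ) else 0)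

/-
Sherman–Morrison turns the rank-one update into a shift of the opinions:
`z⁺ = z - c • u` with `u = (I + L)⁻¹ v_ij` and `c = (z_i - z_j) / (δ⁻¹ + v_ijᵀ u)`.
Since `I + L` is symmetric and fixes `1`, the vector `u` has mean zero, so the mean of the opinions
does not move and `P(z⁺) - P(z) = c² ‖u‖² - 2 c z̃ᵀu`. The sign of this quadratic in `c` is the
stated criterion, because `‖u‖² = v_ijᵀ(I+L)⁻²v_ij` and `-∂_{w_ij}P(L) = 2 (z_i - z_j) z̃ᵀu`.
-/

namespace Matrix

variable {m K : Type*} [Fintype m] [DecidableEq m] [Field K]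

theorem inv_add_smul_vecMulVec {A : Matrix m m K} (hA : IsUnit A.det) (u w : m → K) {δ : K}
    (h : 1 + δ * (w ⬝ᵥ A⁻¹ *ᵥ u) ≠ 0) :
    (A + δ • vecMulVec u w)⁻¹ =
      A⁻¹ - (δ / (1 + δ * (w ⬝ᵥ A⁻¹ *ᵥ u))) • vecMulVec (A⁻¹ *ᵥ u) (w ᵥ* A⁻¹) := by
  refine inv_eq_right_inv ?_
  set k := δ / (1 + δ * (w ⬝ᵥ A⁻¹ *ᵥ u))
  have hk : δ - k - δ * k * (w ⬝ᵥ A⁻¹ *ᵥ u) = 0 := by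
    simp only [k]
    field_simp
    ring
  clear_value k
  calc (A + δ • vecMulVec u w) * (A⁻¹ - k • vecMulVec (A⁻¹ *ᵥ u) (w ᵥ* A⁻¹))
      = 1 + (δ - k - δ * k * (w ⬝ᵥ A⁻¹ *ᵥ u)) • vecMulVec u (w ᵥ* A⁻¹) := by
        rw [add_mul, mul_sub, mul_sub, Matrix.mul_smul, Matrix.smul_mul, Matrix.smul_mul,
          Matrix.mul_smul, mul_nonsing_inv A hA, vecMulVec_mul_vecMulVec, vecMulVec_mul,
          mul_vecMulVec, mulVec_mulVec, mul_nonsing_inv A hA, one_mulVec, vecMulVec_smul]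
        module
    _ = 1 := by rw [hk, zero_smul, add_zero]

theorem sum_inv_mulVec {A : Matrix m m K} (hA : IsUnit A.det) (h : 1 ᵥ* A = 1) (x : m → K) :
    ∑ k, (A⁻¹ *ᵥ x) k = ∑ k, x k := by
  have h' : 1 ᵥ* A⁻¹ = 1 := by
    rw [← h, vecMul_vecMul, mul_nonsing_inv A hA, vecMul_one, h]
  rw [← one_dotProduct, dotProduct_mulVec, h', one_dotProduct]

theorem inv_add_smul_vecMulVec_mulVec {A : Matrix m m K} (hA : IsUnit A.det) (u w x : m → K)
    {δ : K} (hδ : δ ≠ 0) (h : δ⁻¹ + w ⬝ᵥ A⁻¹ *ᵥ u ≠ 0) :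
    (A + δ • vecMulVec u w)⁻¹ *ᵥ x =
      A⁻¹ *ᵥ x - ((w ⬝ᵥ A⁻¹ *ᵥ x) / (δ⁻¹ + w ⬝ᵥ A⁻¹ *ᵥ u)) • A⁻¹ *ᵥ u := by
  have h' : 1 + δ * (w ⬝ᵥ A⁻¹ *ᵥ u) ≠ 0 := by
    rwa [← mul_inv_cancel₀ hδ, ← mul_add, mul_ne_zero_iff_left hδ]
  have hcoef : δ / (1 + δ * (w ⬝ᵥ A⁻¹ *ᵥ u)) * (w ⬝ᵥ A⁻¹ *ᵥ x) =
      (w ⬝ᵥ A⁻¹ *ᵥ x) / (δ⁻¹ + w ⬝ᵥ A⁻¹ *ᵥ u) := by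
    field_simp
  rw [inv_add_smul_vecMulVec hA u w h', sub_mulVec, smul_mulVec, vecMulVec_mulVec,
    op_smul_eq_smul, ← dotProduct_mulVec, smul_smul, hcoef]

end Matrix

theorem vij_dotProduct {n : ℕ} (i j : Fin n) (x : Fin n → ℝ) : vij i j ⬝ᵥ x = x i - x j := by
  simp [vij, dotProduct, sub_mul, ite_mul, Finset.sum_sub_distrib]

theorem sum_vij {n : ℕ} (i j : Fin n) : ∑ k, vij i j k = 0 := by
  simp [vij, Finset.sum_sub_distrib]

theorem lap_mulVec_apply {n : ℕ} (W : Matrix (Fin n) (Fin n) ℝ) (x : Fin n → ℝ) (a : Fin n) :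
    (lap W *ᵥ x) a = ∑ b, W a b * (x a - x b) := by
  rw [lap, sub_mulVec, Pi.sub_apply, mulVec_diagonal]
  simp [deg, mulVec, dotProduct, Finset.sum_mul, mul_sub]

theorem lap_mulVec_one {n : ℕ} (W : Matrix (Fin n) (Fin n) ℝ) : lap W *ᵥ 1 = 0 := by
  ext a; simp [lap_mulVec_apply]

theorem lap_isSymm {n : ℕ} {W : Matrix (Fin n) (Fin n) ℝ} (hW : W.IsSymm) : (lap W).IsSymm := by
  rw [IsSymm, lap, transpose_sub, diagonal_transpose, hW.eq]

theorem two_mul_dotProduct_lap_mulVec {n : ℕ} {W : Matrix (Fin n) (Fin n) ℝ} (hW : W.IsSymm)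
    (x : Fin n → ℝ) :
    2 * (x ⬝ᵥ lap W *ᵥ x) = ∑ a, ∑ b, W a b * (x a - x b) ^ 2 := by
  have hswap : ∑ a, ∑ b, W a b * (x a * (x a - x b)) = ∑ a, ∑ b, W a b * (x b * (x b - x a)) := by
    rw [Finset.sum_comm]
    exact Finset.sum_congr rfl fun a _ => Finset.sum_congr rfl fun b _ => by rw [hW.apply a b]
  have hrow : x ⬝ᵥ lap W *ᵥ x = ∑ a, ∑ b, W a b * (x a * (x a - x b)) := by
    simp only [dotProduct, lap_mulVec_apply, Finset.mul_sum]
    exact Finset.sum_congr rfl fun a _ => Finset.sum_congr rfl fun b _ => by ring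
  rw [two_mul, hrow]
  nth_rw 2 [hswap]
  simp only [← Finset.sum_add_distrib]
  exact Finset.sum_congr rfl fun a _ => Finset.sum_congr rfl fun b _ => by ring

theorem lap_posSemidef {n : ℕ} {W : Matrix (Fin n) (Fin n) ℝ} (hW : W.IsSymm)
    (hW0 : ∀ a b, 0 ≤ W a b) : (lap W).PosSemidef := by
  refine .of_dotProduct_mulVec_nonneg (isHermitian_iff_isSymm.2 (lap_isSymm hW)) fun x => ?_
  have hquad := two_mul_dotProduct_lap_mulVec hW x
  have hsum : 0 ≤ ∑ a, ∑ b, W a b * (x a - x b) ^ 2 :=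
    Finset.sum_nonneg fun a _ => Finset.sum_nonneg fun b _ => mul_nonneg (hW0 a b) (sq_nonneg _)
  simp only [star_trivial]
  linarith

theorem one_vecMul_one_add_lap {n : ℕ} {W : Matrix (Fin n) (Fin n) ℝ} (hW : W.IsSymm) :
    1 ᵥ* (1 + lap W) = 1 := by
  rw [vecMul_add, vecMul_one, ← (lap_isSymm hW).eq, vecMul_transpose, lap_mulVec_one, add_zero]

theorem one_add_lap_posDef {n : ℕ} {W : Matrix (Fin n) (Fin n) ℝ} (hW : W.IsSymm)
    (hW0 : ∀ a b, 0 ≤ W a b) : (1 + lap W).PosDef :=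
  PosDef.one.add_posSemidef (lap_posSemidef hW hW0)

theorem mean_sub_smul {n : ℕ} {u : Fin n → ℝ} (hu : ∑ k, u k = 0) (x : Fin n → ℝ) (c : ℝ) :
    mean (x - c • u) = mean x := by
  simp [mean, Finset.sum_sub_distrib, ← Finset.mul_sum, hu]

theorem pol_sub_smul {n : ℕ} {u : Fin n → ℝ} (hu : ∑ k, u k = 0) (x : Fin n → ℝ) (c : ℝ) :
    pol (x - c • u) = pol x - 2 * c * (ctr x ⬝ᵥ u) + c ^ 2 * (u ⬝ᵥ u) := by
  simp only [pol, mean_sub_smul hu, ctr, dotProduct, Pi.sub_apply, Pi.smul_apply, smul_eq_mul,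
    Finset.mul_sum, ← Finset.sum_sub_distrib, ← Finset.sum_add_distrib]
  exact Finset.sum_congr rfl fun k _ => by ring

theorem sub_two_mul_add_sq_mul_lt_self_iff {p d e q r : ℝ} (hr : 0 < r) :
    p - 2 * (d / r) * e + (d / r) ^ 2 * q < p ↔ d ^ 2 * q / r < 2 * (d * e) := by
  have hdiff : p - 2 * (d / r) * e + (d / r) ^ 2 * q - p = (d ^ 2 * q / r - 2 * (d * e)) / r := by
    field_simp
    ring
  rw [← sub_neg, hdiff, div_lt_iff₀ hr, zero_mul, sub_neg]

theorem stmt_8_general {n : ℕ} (wbar : ℝ)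
    (W : Matrix (Fin n) (Fin n) ℝ)
    (hsymm : W.IsSymm)
    (hW : ∀ i j, 0 ≤ W i j ∧ W i j ≤ wbar)
    (s : Fin n → ℝ) (i j : Fin n)
    (δ : ℝ) (hδ0 : 0 < δ)
    (z zp : Fin n → ℝ)
    (hz : z = (1 + lap W)⁻¹ *ᵥ s)
    (hzp : zp = (1 + (lap W + δ • vecMulVec (vij i j) (vij i j)))⁻¹ *ᵥ s) :
    pol zp < pol z ↔
      -(-2 * (ctr z ⬝ᵥ ((1 + lap W)⁻¹ *ᵥ
          (vecMulVec (vij i j) (vij i j) *ᵥ ctr z)))) >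
        (z i - z j) ^ 2 * (vij i j ⬝ᵥ (((1 + lap W)⁻¹ * (1 + lap W)⁻¹) *ᵥ vij i j)) /
          (δ⁻¹ + vij i j ⬝ᵥ ((1 + lap W)⁻¹ *ᵥ vij i j)) := by
  set A := 1 + lap W
  set v := vij i j
  set u := A⁻¹ *ᵥ v
  have hA : A.PosDef := one_add_lap_posDef hsymm fun a b => (hW a b).1
  have hAdet : IsUnit A.det := (isUnit_iff_isUnit_det A).1 hA.isUnit
  have hAinv : A⁻¹.IsSymm := (isSymm_one.add (lap_isSymm hsymm)).inv
  have hr : 0 < δ⁻¹ + v ⬝ᵥ u := add_pos_of_pos_of_nonneg (inv_pos.2 hδ0)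
    (by simpa using hA.inv.posSemidef.dotProduct_mulVec_nonneg v)
  have hu : ∑ k, u k = 0 := by rw [sum_inv_mulVec hAdet (one_vecMul_one_add_lap hsymm), sum_vij]
  have hzp' : zp = z - ((z i - z j) / (δ⁻¹ + v ⬝ᵥ u)) • u := by
    rw [hzp, ← add_assoc, inv_add_smul_vecMulVec_mulVec hAdet v v s hδ0.ne' hr.ne', ← hz,
      vij_dotProduct]
  have hderiv : ctr z ⬝ᵥ (A⁻¹ *ᵥ (vecMulVec v v *ᵥ ctr z)) = (z i - z j) * (ctr z ⬝ᵥ u) := by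
    rw [vecMulVec_mulVec, op_smul_eq_smul, mulVec_smul, dotProduct_smul, vij_dotProduct,
      smul_eq_mul]
    simp only [ctr, sub_sub_sub_cancel_right]
    rfl
  have hcurv : v ⬝ᵥ ((A⁻¹ * A⁻¹) *ᵥ v) = u ⬝ᵥ u := by
    rw [← mulVec_mulVec, dotProduct_mulVec, ← hAinv.eq, vecMul_transpose, hAinv.eq]
  rw [hzp', pol_sub_smul hu, hderiv, hcurv, gt_iff_lt, neg_mul, neg_neg]
  exact sub_two_mul_add_sq_mul_lt_self_iff hr

/-- adding weight `δ` to the edge `(i,j)` strictly reduces polarization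
if and only if
`-∂_{w_ij}P(L) > (z_i - z_j)² (v_ijᵀ(I+L)⁻²v_ij) / (δ⁻¹ + v_ijᵀ(I+L)⁻¹v_ij)`. -/
theorem stmt_8 {n : ℕ} (hn : 2 ≤ n) (wbar : ℝ) (hwbar : 0 < wbar)
    (W : Matrix (Fin n) (Fin n) ℝ)
    (hsymm : W.IsSymm) (hdiag : ∀ i, W i i = 0)
    (hW : ∀ i j, 0 ≤ W i j ∧ W i j ≤ wbar)
    (s : Fin n → ℝ) (i j : Fin n) (hij : i ≠ j)
    (hwij : W i j < wbar)
    (δ : ℝ) (hδ0 : 0 < δ) (hδ : δ ≤ wbar - W i j)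
    (z zp : Fin n → ℝ)
    (hz : z = (1 + lap W)⁻¹ *ᵥ s)
    (hzp : zp = (1 + (lap W + δ • vecMulVec (vij i j) (vij i j)))⁻¹ *ᵥ s) :
    pol zp < pol z ↔
      -(-2 * (ctr z ⬝ᵥ ((1 + lap W)⁻¹ *ᵥ
          (vecMulVec (vij i j) (vij i j) *ᵥ ctr z)))) >
        (z i - z j) ^ 2 * (vij i j ⬝ᵥ (((1 + lap W)⁻¹ * (1 + lap W)⁻¹) *ᵥ vij i j)) /
          (δ⁻¹ + vij i j ⬝ᵥ ((1 + lap W)⁻¹ *ᵥ vij i j)) :=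
  stmt_8_general wbar W hsymm hW s i j δ hδ0 z zp hz hzp
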